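/- If φ : ℝ → ℝ is twice differentiable with values in (-1,1), satisfies φ'' = (ω - γφ²)φ/(1-φ²), tends to 0 together with φ' at ±∞ (so the conserved energy is 0), and attains its maximum value M ∈ (0,1) at some point, then M satisfies ((ω-γ)/2)·log(1-M²) = (γ/2)·M². -/

import Mathlib

open Filter Topology

/-!
Multiplying the equation by `φ'` shows that
`E = φ'²/2 - γφ²/2 + ((ω - γ)/2) log (1 - φ²)` is a first integral. It tends to `0` at `+∞`,
so it vanishes identically; at the critical point `x₀` this is the claimed identity.
-/

/-- The first integral of `φ'' = (ω - γφ²)φ/(1 - φ²)`, evaluated at `φ = u`, `φ' = v`. -/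
noncomputable def conservedEnergy (ω γ u v : ℝ) : ℝ :=
  v ^ 2 / 2 - γ / 2 * u ^ 2 + (ω - γ) / 2 * Real.log (1 - u ^ 2)

theorem hasDerivAt_conservedEnergy {ω γ : ℝ} {φ φ' φ'' : ℝ → ℝ} {x : ℝ}
    (hφ : HasDerivAt φ (φ' x) x) (hφ' : HasDerivAt φ' (φ'' x) x) (hx : 1 - φ x ^ 2 ≠ 0)
    (hode : φ'' x = (ω - γ * φ x ^ 2) * φ x / (1 - φ x ^ 2)) :
    HasDerivAt (fun y => conservedEnergy ω γ (φ y) (φ' y)) 0 x := by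
  have hlog : HasDerivAt (fun y => Real.log (1 - φ y ^ 2))
      (-(2 * φ x * φ' x) / (1 - φ x ^ 2)) x := by
    refine ((hasDerivAt_const x (1 : ℝ)).fun_sub (hφ.fun_pow 2)).log hx |>.congr_deriv ?_
    ring
  refine ((((hφ'.fun_pow 2).div_const 2).sub ((hφ.fun_pow 2).const_mul (γ / 2))).add
    (hlog.const_mul ((ω - γ) / 2))).congr_deriv ?_
  rw [hode]
  field_simp
  ring

theorem tendsto_conservedEnergy_zero {α : Type*} {l : Filter α} {ω γ : ℝ} {u v : α → ℝ}
    (hu : Tendsto u l (𝓝 0)) (hv : Tendsto v l (𝓝 0)) :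
    Tendsto (fun a => conservedEnergy ω γ (u a) (v a)) l (𝓝 0) := by
  have hcont : ContinuousAt (fun p : ℝ × ℝ => conservedEnergy ω γ p.1 p.2) (0, 0) := by
    unfold conservedEnergy
    fun_prop (disch := norm_num)
  have hzero : conservedEnergy ω γ 0 0 = 0 := by simp [conservedEnergy]
  have h := hcont.tendsto.comp (hu.prodMk_nhds hv)
  rw [hzero] at h
  exact h

theorem eq_of_hasDerivAt_zero_of_tendsto {E : Type*} [NormedAddCommGroup E] [NormedSpace ℝ E]
    {f : ℝ → E} {l : Filter ℝ} [l.NeBot] {a : E} (hf : ∀ x, HasDerivAt f 0 x)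
    (hlim : Tendsto f l (𝓝 a)) (x : ℝ) : f x = a := by
  have hconst : ∀ y, f x = f y := fun y =>
    is_const_of_deriv_eq_zero (fun z => (hf z).differentiableAt) (fun z => (hf z).deriv) x y
  exact tendsto_nhds_unique ((tendsto_const_nhds (x := f x)).congr hconst) hlim

theorem stmt_7_general (ω γ : ℝ)
    (φ φ' φ'' : ℝ → ℝ)
    (hφ : ∀ x, HasDerivAt φ (φ' x) x) (hφ' : ∀ x, HasDerivAt φ' (φ'' x) x)
    (hb : ∀ x, |φ x| < 1)
    (hode : ∀ x, φ'' x = (ω - γ * φ x ^ 2) * φ x / (1 - φ x ^ 2))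
    (hdecay : Tendsto φ atTop (nhds 0) ∧ Tendsto φ atBot (nhds 0) ∧
      Tendsto φ' atTop (nhds 0) ∧ Tendsto φ' atBot (nhds 0))
    (M x₀ : ℝ) (hM : M = φ x₀) (hcrit : φ' x₀ = 0) :
    (ω - γ) / 2 * Real.log (1 - M ^ 2) = γ / 2 * M ^ 2 := by
  have hsq : ∀ x, 1 - φ x ^ 2 ≠ 0 := fun x =>
    (sub_pos.2 ((sq_lt_one_iff_abs_lt_one _).2 (hb x))).ne'
  have hE : conservedEnergy ω γ (φ x₀) (φ' x₀) = 0 :=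
    eq_of_hasDerivAt_zero_of_tendsto
      (fun x => hasDerivAt_conservedEnergy (hφ x) (hφ' x) (hsq x) (hode x))
      (tendsto_conservedEnergy_zero hdecay.1 hdecay.2.2.1) x₀
  rw [conservedEnergy, hcrit, ← hM] at hE
  linarith

/-- If φ solves φ'' = (ω-γφ²)φ/(1-φ²) with |φ|<1, φ and φ' tend to 0 at ±∞, and φ
attains its maximum M ∈ (0,1) at a critical point, then ((ω-γ)/2)·log(1-M²) = (γ/2)·M². -/
theorem stmt_7 (ω γ : ℝ) (hγ : 0 < γ) (hω : ω ∈ Set.Ioo 0 γ)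
    (φ φ' φ'' : ℝ → ℝ)
    (hφ : ∀ x, HasDerivAt φ (φ' x) x) (hφ' : ∀ x, HasDerivAt φ' (φ'' x) x)
    (hb : ∀ x, |φ x| < 1)
    (hode : ∀ x, φ'' x = (ω - γ * φ x ^ 2) * φ x / (1 - φ x ^ 2))
    (hdecay : Tendsto φ atTop (nhds 0) ∧ Tendsto φ atBot (nhds 0) ∧
      Tendsto φ' atTop (nhds 0) ∧ Tendsto φ' atBot (nhds 0))
    (M x₀ : ℝ) (hM : M = φ x₀) (hMpos : 0 < M) (hM1 : M < 1)
    (hmax : ∀ x, φ x ≤ M) (hcrit : φ' x₀ = 0) :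
    (ω - γ) / 2 * Real.log (1 - M ^ 2) = γ / 2 * M ^ 2 :=
  stmt_7_general ω γ φ φ' φ'' hφ hφ' hb hode hdecay M x₀ hM hcrit
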